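/- arXiv:1411.0064 — 3 statements merged into one kernel-verified Lean document; each statement's English description precedes it below -/
import Mathlib

section
/- Let x, y ∈ Δⁿ with π(y − x, x) > 0 (y infective against x). Define ε = min(−π(y − x, x)/π(y − x), 1) if π(y − x) < 0 and ε = 1 otherwise, where π(y − x) = (y − x)^T A (y − x). Let z = (1 − ε)x + εy. Then π(z) > π(x). -/
/-!
Along the segment `z = x + ε (y - x)` the payoff `π(z)` is the quadratic
`π(x) + 2 ε b + ε² c` with `b = π(y - x, x) > 0` and `c = π(y - x)`.
The step size is chosen so that `0 < ε` and `ε c ≥ -b`, whence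
`2 ε b + ε² c = ε (2 b + ε c) ≥ ε b > 0`.
-/

open Matrix Finset

theorem Matrix.IsSymm.dotProduct_mulVec_comm {ι R : Type*} [Fintype ι] [CommSemiring R]
    {A : Matrix ι ι R} (hA : A.IsSymm) (u v : ι → R) :
    u ⬝ᵥ (A *ᵥ v) = v ⬝ᵥ (A *ᵥ u) := by
  conv_rhs => rw [← hA.eq]
  rw [dotProduct_mulVec, mulVec_transpose, dotProduct_comm]

theorem Matrix.IsSymm.dotProduct_mulVec_add_smul {ι R : Type*} [Fintype ι] [CommRing R]
    {A : Matrix ι ι R} (hA : A.IsSymm) (x d : ι → R) (t : R) :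
    (x + t • d) ⬝ᵥ (A *ᵥ (x + t • d)) =
      x ⬝ᵥ (A *ᵥ x) + 2 * t * (d ⬝ᵥ (A *ᵥ x)) + t ^ 2 * (d ⬝ᵥ (A *ᵥ d)) := by
  simp only [add_dotProduct, dotProduct_add, smul_dotProduct, dotProduct_smul,
    mulVec_add, mulVec_smul, smul_eq_mul, hA.dotProduct_mulVec_comm x d]
  ring

/-- For `c < 0` this maximizes `2 ε b + ε² c` over `ε ∈ [0, 1]`. -/
noncomputable def stepSize (b c : ℝ) : ℝ :=
  if c < 0 then min (-b / c) 1 else 1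

theorem stepSize_pos {b c : ℝ} (hb : 0 < b) : 0 < stepSize b c := by
  unfold stepSize
  split_ifs with hc
  · exact lt_min (div_pos_of_neg_of_neg (neg_neg_of_pos hb) hc) one_pos
  · exact one_pos

theorem neg_le_stepSize_mul {b c : ℝ} (hb : 0 < b) : -b ≤ stepSize b c * c := by
  unfold stepSize
  split_ifs with hc
  · calc -b = -b / c * c := (div_mul_cancel₀ _ hc.ne).symm
      _ ≤ min (-b / c) 1 * c := mul_le_mul_of_nonpos_right (min_le_left _ _) hc.le
  · linarith

theorem quadratic_step_pos {ε b c : ℝ} (hε : 0 < ε) (hb : 0 < b) (hεc : -b ≤ ε * c) :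
    0 < 2 * ε * b + ε ^ 2 * c := by
  have : 0 < ε * (2 * b + ε * c) := mul_pos hε (by linarith)
  linarith

theorem stmt_2_general {n : ℕ} (A : Matrix (Fin n) (Fin n) ℝ)
    (hA : ∀ i j, A i j = A j i)
    (x y : Fin n → ℝ)
    (hinf : (y - x) ⬝ᵥ (A *ᵥ x) > 0)
    (ε : ℝ)
    (hε : ε = if (y - x) ⬝ᵥ (A *ᵥ (y - x)) < 0 then
        min (-((y - x) ⬝ᵥ (A *ᵥ x)) / ((y - x) ⬝ᵥ (A *ᵥ (y - x)))) 1 else 1)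
    (z : Fin n → ℝ) (hz : z = (1 - ε) • x + ε • y) :
    z ⬝ᵥ (A *ᵥ z) > x ⬝ᵥ (A *ᵥ x) := by
  have hsymm : A.IsSymm := IsSymm.ext fun i j => hA j i
  have hz' : z = x + ε • (y - x) := by
    rw [hz, smul_sub, sub_smul, one_smul]
    abel
  rw [hz', hsymm.dotProduct_mulVec_add_smul, add_assoc, gt_iff_lt, lt_add_iff_pos_right]
  rw [← stepSize] at hε
  subst hε
  exact quadratic_step_pos (stepSize_pos hinf) hinf (neg_le_stepSize_mul hinf)

theorem stmt_2 {n : ℕ} (A : Matrix (Fin n) (Fin n) ℝ)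
    (hA : ∀ i j, A i j = A j i)
    (x y : Fin n → ℝ) (hx : x ∈ stdSimplex ℝ (Fin n)) (hy : y ∈ stdSimplex ℝ (Fin n))
    (hinf : (y - x) ⬝ᵥ (A *ᵥ x) > 0)
    (ε : ℝ)
    (hε : ε = if (y - x) ⬝ᵥ (A *ᵥ (y - x)) < 0 then
        min (-((y - x) ⬝ᵥ (A *ᵥ x)) / ((y - x) ⬝ᵥ (A *ᵥ (y - x)))) 1 else 1)
    (z : Fin n → ℝ) (hz : z = (1 - ε) • x + ε • y) :
    z ⬝ᵥ (A *ᵥ z) > x ⬝ᵥ (A *ᵥ x) :=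
  stmt_2_general A hA x y hinf ε hε z hz
end

section
/- With the hypotheses of the invasion step (y infective against x, z = (1 − ε)x + εy with ε = ε_y(x) as defined), y is not infective against z, i.e., π(y − z, z) ≤ 0. -/
open Matrix

/-!
Along the segment `z = (1 - ε) x + ε y` one has
`π(y - z, z) = (1 - ε) (π(y - x, x) + ε π(y - x))`, and the invasion share is either `1` or
the root `-π(y - x, x) / π(y - x)` of the second factor, so one of the two factors vanishes.
-/

lemma sub_dotProduct_mulVec_segment {ι R : Type*} [Fintype ι] [CommRing R]
    (A : Matrix ι ι R) (x y : ι → R) (ε : R) :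
    (y - ((1 - ε) • x + ε • y)) ⬝ᵥ (A *ᵥ ((1 - ε) • x + ε • y)) =
      (1 - ε) * ((y - x) ⬝ᵥ (A *ᵥ x) + ε * (y - x) ⬝ᵥ (A *ᵥ (y - x))) := by
  have hyz : y - ((1 - ε) • x + ε • y) = (1 - ε) • (y - x) := by
    ext i; simp only [Pi.sub_apply, Pi.add_apply, Pi.smul_apply, smul_eq_mul]; ring
  have hz : (1 - ε) • x + ε • y = x + ε • (y - x) := by
    ext i; simp only [Pi.sub_apply, Pi.add_apply, Pi.smul_apply, smul_eq_mul]; ring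
  rw [hyz, hz, smul_dotProduct, mulVec_add, mulVec_smul, dotProduct_add, dotProduct_smul,
    smul_eq_mul, smul_eq_mul]

lemma one_sub_mul_add_mul_invasionShare_eq_zero (c d : ℝ) :
    let ε := if d < 0 then min (-c / d) 1 else 1
    (1 - ε) * (c + ε * d) = 0 := by
  intro ε
  by_cases hd : d < 0
  · by_cases hroot : -c / d ≤ 1
    · have hε : ε = -c / d := by simp only [ε, if_pos hd, min_eq_left hroot]
      rw [hε, div_mul_cancel₀ _ hd.ne, add_neg_cancel, mul_zero]
    · have hε : ε = 1 := by simp only [ε, if_pos hd, min_eq_right (le_of_not_ge hroot)]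
      rw [hε, sub_self, zero_mul]
  · have hε : ε = 1 := by simp only [ε, if_neg hd]
    rw [hε, sub_self, zero_mul]

theorem stmt_3_general {n : ℕ} (A : Matrix (Fin n) (Fin n) ℝ)
    (x y : Fin n → ℝ)
    (ε : ℝ)
    (hε : ε = if (y - x) ⬝ᵥ (A *ᵥ (y - x)) < 0 then
        min (-((y - x) ⬝ᵥ (A *ᵥ x)) / ((y - x) ⬝ᵥ (A *ᵥ (y - x)))) 1 else 1)
    (z : Fin n → ℝ) (hz : z = (1 - ε) • x + ε • y) :
    (y - z) ⬝ᵥ (A *ᵥ z) ≤ 0 := by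
  rw [hz, sub_dotProduct_mulVec_segment, hε]
  exact (one_sub_mul_add_mul_invasionShare_eq_zero _ _).le

theorem stmt_3 {n : ℕ} (A : Matrix (Fin n) (Fin n) ℝ)
    (hA : ∀ i j, A i j = A j i)
    (x y : Fin n → ℝ) (hx : x ∈ stdSimplex ℝ (Fin n)) (hy : y ∈ stdSimplex ℝ (Fin n))
    (hinf : (y - x) ⬝ᵥ (A *ᵥ x) > 0)
    (ε : ℝ)
    (hε : ε = if (y - x) ⬝ᵥ (A *ᵥ (y - x)) < 0 then
        min (-((y - x) ⬝ᵥ (A *ᵥ x)) / ((y - x) ⬝ᵥ (A *ᵥ (y - x)))) 1 else 1)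
    (z : Fin n → ℝ) (hz : z = (1 - ε) • x + ε • y) :
    (y - z) ⬝ᵥ (A *ᵥ z) ≤ 0 :=
  stmt_3_general A x y ε hε z hz
end

section
/- With the same setup, let λ_out = Σ_{i∈α} x_i exp(+k‖v_i − D‖) and R_out = (1/k)·ln(λ_out/π(x)). Then for every index j with ‖v_j − D‖ > R_out, one has π(e_j, x) < π(x); that is, every data point strictly outside the outer ball is non-infective. -/
/-! By the reverse triangle inequality every affinity factors through the centre `D`:
`exp (-k‖v j - v i‖) ≤ exp (-k‖v j - D‖) * exp (k‖v i - D‖)`. Averaging against `x` gives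
`π(e_j, x) ≤ exp (-k‖v j - D‖) * λ_out`, and `‖v j - D‖ > R_out` says exactly that the right-hand
side is below `π(x)`. -/

open Matrix Finset

section Affinity

variable {E : Type*} [SeminormedAddCommGroup E]

theorem exp_neg_mul_norm_sub_le {k : ℝ} (hk : 0 ≤ k) (u w c : E) :
    Real.exp (-k * ‖u - w‖) ≤ Real.exp (-k * ‖u - c‖) * Real.exp (k * ‖w - c‖) := by
  have htri : ‖u - c‖ - ‖w - c‖ ≤ ‖u - w‖ := by
    simpa only [sub_sub_sub_cancel_right] using norm_sub_norm_le (u - c) (w - c)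
  rw [← Real.exp_add, Real.exp_le_exp]
  nlinarith

theorem mulVec_apply_le_exp_mul_sum {ι : Type*} [Fintype ι] [DecidableEq ι] {k : ℝ}
    (hk : 0 ≤ k) (v : ι → E) (A : Matrix ι ι ℝ)
    (hA : ∀ i j, A i j = if i = j then 0 else Real.exp (-k * ‖v i - v j‖))
    {x : ι → ℝ} (hx : ∀ i, 0 ≤ x i) (c : E) (j : ι) :
    (A *ᵥ x) j ≤ Real.exp (-k * ‖v j - c‖) * ∑ i, x i * Real.exp (k * ‖v i - c‖) := by
  rw [mulVec, dotProduct, mul_sum]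
  refine sum_le_sum fun i _ => ?_
  have hAji : A j i ≤ Real.exp (-k * ‖v j - c‖) * Real.exp (k * ‖v i - c‖) := by
    rw [hA]
    split_ifs
    · positivity
    · exact exp_neg_mul_norm_sub_le hk (v j) (v i) c
  calc A j i * x i ≤ Real.exp (-k * ‖v j - c‖) * Real.exp (k * ‖v i - c‖) * x i :=
        mul_le_mul_of_nonneg_right hAji (hx i)
    _ = _ := by ring

end Affinity

theorem exp_neg_mul_mul_lt_of_log_div_lt {k r lam p : ℝ} (hk : 0 < k) (hp : 0 < p)
    (hr : (1 / k) * Real.log (lam / p) < r) :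
    Real.exp (-k * r) * lam < p := by
  rcases le_or_gt lam 0 with hlam | hlam
  · nlinarith [Real.exp_pos (-k * r)]
  have hlog : Real.log (lam / p) < k * r := by
    rwa [one_div, inv_mul_lt_iff₀ hk] at hr
  have hexp : lam < Real.exp (k * r) * p := by
    rwa [← div_lt_iff₀ hp, ← Real.log_lt_iff_lt_exp (div_pos hlam hp)]
  calc Real.exp (-k * r) * lam < Real.exp (-k * r) * (Real.exp (k * r) * p) := by gcongr
    _ = p := by rw [← mul_assoc, ← Real.exp_add, neg_mul, neg_add_cancel, Real.exp_zero, one_mul]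

theorem stmt_9_general {n d : ℕ} (v : Fin n → EuclideanSpace ℝ (Fin d)) (k : ℝ) (hk : 0 < k)
    (A : Matrix (Fin n) (Fin n) ℝ)
    (hAdef : ∀ i j, A i j = if i = j then 0 else Real.exp (-k * ‖v i - v j‖))
    (x : Fin n → ℝ) (hx : x ∈ stdSimplex ℝ (Fin n))
    (D : EuclideanSpace ℝ (Fin d))
    (hπ : 0 < x ⬝ᵥ (A *ᵥ x))
    (lamOut : ℝ) (hlam : lamOut = ∑ i, x i * Real.exp (k * ‖v i - D‖))
    (j : Fin n)
    (hRout : ‖v j - D‖ > (1 / k) * Real.log (lamOut / (x ⬝ᵥ (A *ᵥ x)))) :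
    (A *ᵥ x) j < x ⬝ᵥ (A *ᵥ x) := by
  calc (A *ᵥ x) j ≤ Real.exp (-k * ‖v j - D‖) * lamOut :=
        hlam ▸ mulVec_apply_le_exp_mul_sum hk.le v A hAdef hx.1 D j
    _ < x ⬝ᵥ (A *ᵥ x) := exp_neg_mul_mul_lt_of_log_div_lt hk hπ hRout

theorem stmt_9 {n d : ℕ} (v : Fin n → EuclideanSpace ℝ (Fin d)) (k : ℝ) (hk : 0 < k)
    (A : Matrix (Fin n) (Fin n) ℝ)
    (hAdef : ∀ i j, A i j = if i = j then 0 else Real.exp (-k * ‖v i - v j‖))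
    (x : Fin n → ℝ) (hx : x ∈ stdSimplex ℝ (Fin n))
    (D : EuclideanSpace ℝ (Fin d)) (hD : D = ∑ i, x i • v i)
    (hπ : 0 < x ⬝ᵥ (A *ᵥ x))
    (lamOut : ℝ) (hlam : lamOut = ∑ i, x i * Real.exp (k * ‖v i - D‖))
    (j : Fin n)
    (hRout : ‖v j - D‖ > (1 / k) * Real.log (lamOut / (x ⬝ᵥ (A *ᵥ x)))) :
    (A *ᵥ x) j < x ⬝ᵥ (A *ᵥ x) :=
  stmt_9_general v k hk A hAdef x hx D hπ lamOut hlam j hRout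
end
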